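/- arXiv:2106.13834 — 4 statements merged into one kernel-verified Lean document; each statement's English description precedes it below -/
import Mathlib

section
/- For every K ∈ ℕ, coefficients π ∈ ℝ^K, scalar λ ∈ ℝ, vectors p_1, …, p_K ∈ ℝ^d, and integer m ≥ 1, the polynomial-kernel model y(x) = Σ_{k=1}^K π_k (λ + p_k^⊤ x)^m can be written as an LPNN function: there exist a depth L, hidden widths d_1, …, d_L, LPNN weight matrices W^1, …, W^L and V^1, …, V^L acting on the augmented input x̂ = (x, 1) ∈ ℝ^{d+1}, and a linear readout vector u ∈ ℝ^{d_L}, such that for all x ∈ ℝ^d, Σ_{k=1}^K π_k (λ + p_k^⊤ x)^m = u^⊤ h^L(x̂). -/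
open Matrix

/-- Low-rank polynomial network (LPNN): widths `d`, with `d 0` the input
dimension. `lpnn d W V x L` is the hidden layer `h^L(x)`, defined by
`h^0 = x` and `h^(ℓ+1) = (W^ℓ h^ℓ) ⊙ (V^ℓ x)` (Hadamard product). -/
def lpnn (d : ℕ → ℕ)
    (W : ∀ ℓ : ℕ, Matrix (Fin (d (ℓ + 1))) (Fin (d ℓ)) ℝ)
    (V : ∀ ℓ : ℕ, Matrix (Fin (d (ℓ + 1))) (Fin (d 0)) ℝ)
    (x : Fin (d 0) → ℝ) : ∀ L : ℕ, Fin (d L) → ℝ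
  | 0 => x
  | (L + 1) => ((W L).mulVec (lpnn d W V x L)) * ((V L).mulVec x)

/-!
The first layer outputs the all-ones vector (both its `W` and its `V` read off the constant
coordinate of `x̂ = (x, 1)`); every later layer keeps `W = 1` and has `V` with rows `(p_k, λ)`,
so it multiplies coordinate `k` by `λ + p_kᵀ x`. After `m + 1` layers coordinate `k` holds
`(λ + p_kᵀ x) ^ m`, and the readout is `u = π`.
-/

theorem Fin.snoc_dotProduct_snoc {R : Type*} [Mul R] [AddCommMonoid R] {n : ℕ}
    (u v : Fin n → R) (a b : R) :
    Fin.snoc (α := fun _ => R) u a ⬝ᵥ Fin.snoc (α := fun _ => R) v b = u ⬝ᵥ v + a * b := by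
  simp [dotProduct, Fin.sum_univ_castSucc]

section PolynomialKernel

variable {d K : ℕ}

def constantRows (d K : ℕ) : Matrix (Fin K) (Fin (d + 1)) ℝ :=
  Matrix.of fun _ => Pi.single (Fin.last d) 1

def affineRows (p : Fin K → Fin d → ℝ) (lam : ℝ) : Matrix (Fin K) (Fin (d + 1)) ℝ :=
  Matrix.of fun k => Fin.snoc (α := fun _ => ℝ) (p k) lam

theorem constantRows_mulVec (v : Fin (d + 1) → ℝ) :
    constantRows d K *ᵥ v = fun _ => v (Fin.last d) := by
  ext k
  simp [constantRows, mulVec, single_dotProduct]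

theorem affineRows_mulVec_snoc_one (p : Fin K → Fin d → ℝ) (lam : ℝ) (x : Fin d → ℝ) :
    affineRows p lam *ᵥ Fin.snoc (α := fun _ => ℝ) x 1 = fun k => lam + p k ⬝ᵥ x := by
  ext k
  simp only [affineRows, mulVec, Matrix.of_apply, Fin.snoc_dotProduct_snoc, mul_one, add_comm]

abbrev kernelWidths (d K : ℕ) : ℕ → ℕ
  | 0 => d + 1
  | _ + 1 => K

def kernelW (d K : ℕ) : ∀ ℓ, Matrix (Fin (kernelWidths d K (ℓ + 1))) (Fin (kernelWidths d K ℓ)) ℝ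
  | 0 => constantRows d K
  | _ + 1 => (1 : Matrix (Fin K) (Fin K) ℝ)

def kernelV (p : Fin K → Fin d → ℝ) (lam : ℝ) :
    ∀ ℓ, Matrix (Fin (kernelWidths d K (ℓ + 1))) (Fin (kernelWidths d K 0)) ℝ
  | 0 => constantRows d K
  | _ + 1 => affineRows p lam

theorem lpnn_kernelW_kernelV (p : Fin K → Fin d → ℝ) (lam : ℝ) (v : Fin (d + 1) → ℝ)
    (hv : v (Fin.last d) = 1) (n : ℕ) :
    lpnn (kernelWidths d K) (kernelW d K) (kernelV p lam) v (n + 1) =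
      fun k => (affineRows p lam *ᵥ v) k ^ n := by
  induction n with
  | zero =>
    change (constantRows d K *ᵥ v) * (constantRows d K *ᵥ v) = _
    ext k
    simp [constantRows_mulVec, hv]
  | succ n ih =>
    change ((1 : Matrix (Fin K) (Fin K) ℝ) *ᵥ
        lpnn (kernelWidths d K) (kernelW d K) (kernelV p lam) v (n + 1)) *
      (affineRows p lam *ᵥ v) = _
    rw [one_mulVec, ih]
    ext k
    simp [pow_succ]

end PolynomialKernel

theorem polynomial_kernel_is_lpnn_general (K d : ℕ) (pi : Fin K → ℝ) (lam : ℝ)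
    (p : Fin K → Fin d → ℝ) (m : ℕ) :
    ∃ (L : ℕ) (dd : ℕ → ℕ) (hd : dd 0 = d + 1)
      (W : ∀ ℓ : ℕ, Matrix (Fin (dd (ℓ + 1))) (Fin (dd ℓ)) ℝ)
      (V : ∀ ℓ : ℕ, Matrix (Fin (dd (ℓ + 1))) (Fin (dd 0)) ℝ)
      (u : Fin (dd L) → ℝ),
      ∀ x : Fin d → ℝ,
        ∑ k, pi k * (lam + p k ⬝ᵥ x) ^ m =
          u ⬝ᵥ lpnn dd W V (fun i => Fin.snoc (α := fun _ : Fin (d + 1) => ℝ) x 1 (Fin.cast hd i)) L := by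
  refine ⟨m + 1, kernelWidths d K, rfl, kernelW d K, kernelV p lam, pi, fun x => ?_⟩
  rw [lpnn_kernelW_kernelV p lam _ (by simp)]
  simp only [Fin.cast_eq_self, affineRows_mulVec_snoc_one, dotProduct]

/-- every polynomial-kernel model
`y(x) = ∑ k, πₖ * (λ + pₖᵀ x)^m` (m ≥ 1) can be written as an LPNN function
on the augmented input `x̂ = (x, 1)`, followed by a linear readout `u`. -/
theorem polynomial_kernel_is_lpnn (K d : ℕ) (pi : Fin K → ℝ) (lam : ℝ)
    (p : Fin K → Fin d → ℝ) (m : ℕ) (hm : 1 ≤ m) :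
    ∃ (L : ℕ) (dd : ℕ → ℕ) (hd : dd 0 = d + 1)
      (W : ∀ ℓ : ℕ, Matrix (Fin (dd (ℓ + 1))) (Fin (dd ℓ)) ℝ)
      (V : ∀ ℓ : ℕ, Matrix (Fin (dd (ℓ + 1))) (Fin (dd 0)) ℝ)
      (u : Fin (dd L) → ℝ),
      ∀ x : Fin d → ℝ,
        ∑ k, pi k * (lam + p k ⬝ᵥ x) ^ m =
          u ⬝ᵥ lpnn dd W V (fun i => Fin.snoc (α := fun _ : Fin (d + 1) => ℝ) x 1 (Fin.cast hd i)) L :=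
  polynomial_kernel_is_lpnn_general K d pi lam p m
end

section
/- For every w_0 ∈ ℝ, w_1 ∈ ℝ^{d_0}, and vectors v_1, …, v_{d_0} ∈ ℝ^r, the second-order factorization machine y(x) = w_0 + w_1^⊤ x + Σ_{i=1}^{d_0} Σ_{j=i+1}^{d_0} v_i^⊤ v_j x_i x_j can be written as an LPNN function: there exist a depth L, hidden widths, LPNN weight matrices acting on the augmented input x̂ = (x, 1) ∈ ℝ^{d_0+1}, and a linear readout vector u, such that for all x ∈ ℝ^{d_0}, y(x) = u^⊤ h^L(x̂). -/
open Matrix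

/-! A factorization machine is a quadratic polynomial in `x`, hence a quadratic form
`x̂ᵀ M x̂` in the augmented input `x̂ = (x, 1)`. A single LPNN layer with `W = M` and `V = 1`
outputs `(M x̂) ⊙ x̂`, whose entries sum to `x̂ᵀ M x̂`; so an all-ones readout suffices. -/

theorem sum_sum_Ioi_eq_dotProduct_mulVec {ι : Type*} [Fintype ι] [LinearOrder ι]
    [LocallyFiniteOrderTop ι] (B : ι → ι → ℝ) (x : ι → ℝ) :
    ∑ i, ∑ j ∈ Finset.Ioi i, B i j * x i * x j =
      x ⬝ᵥ Matrix.of (fun i j => if i < j then B i j else 0) *ᵥ x := by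
  simp only [dotProduct, mulVec, of_apply, Finset.mul_sum, ite_mul, zero_mul, mul_ite, mul_zero]
  refine Finset.sum_congr rfl fun i _ => ?_
  rw [← Finset.sum_filter]
  exact Finset.sum_congr (by ext; simp) fun j _ => by ring

/-- The block matrix `[[A, b], [0, c]]`. -/
def augmentedMatrix {n : ℕ} (A : Matrix (Fin n) (Fin n) ℝ) (b : Fin n → ℝ) (c : ℝ) :
    Matrix (Fin (n + 1)) (Fin (n + 1)) ℝ :=
  Fin.snoc (α := fun _ => Fin (n + 1) → ℝ) (fun i => Fin.snoc (A i) (b i)) (Fin.snoc 0 c)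

theorem snoc_dotProduct_augmentedMatrix_mulVec {n : ℕ} (A : Matrix (Fin n) (Fin n) ℝ)
    (b : Fin n → ℝ) (c : ℝ) (x : Fin n → ℝ) :
    (Fin.snoc x 1 : Fin (n + 1) → ℝ) ⬝ᵥ augmentedMatrix A b c *ᵥ Fin.snoc x 1 =
      x ⬝ᵥ A *ᵥ x + b ⬝ᵥ x + c := by
  simp [augmentedMatrix, dotProduct, mulVec, Fin.sum_univ_castSucc, mul_add,
    Finset.sum_add_distrib, add_assoc, mul_comm]

theorem one_dotProduct_lpnn_one {n : ℕ} (M : Matrix (Fin n) (Fin n) ℝ) (x : Fin n → ℝ) :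
    1 ⬝ᵥ lpnn (fun _ => n) (fun _ => M) (fun _ => 1) x 1 = x ⬝ᵥ M *ᵥ x := by
  simp [lpnn, dotProduct, mul_comm]

/-- every second-order factorization machine
`y(x) = w₀ + w₁ᵀ x + ∑_{i<j} vᵢᵀ vⱼ xᵢ xⱼ` can be written as an LPNN function
on the augmented input `x̂ = (x, 1)`, followed by a linear readout `u`. -/
theorem factorization_machine_is_lpnn (d₀ r : ℕ) (w₀ : ℝ) (w₁ : Fin d₀ → ℝ)
    (v : Fin d₀ → Fin r → ℝ) :
    ∃ (L : ℕ) (dd : ℕ → ℕ) (hd : dd 0 = d₀ + 1)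
      (W : ∀ ℓ : ℕ, Matrix (Fin (dd (ℓ + 1))) (Fin (dd ℓ)) ℝ)
      (V : ∀ ℓ : ℕ, Matrix (Fin (dd (ℓ + 1))) (Fin (dd 0)) ℝ)
      (u : Fin (dd L) → ℝ),
      ∀ x : Fin d₀ → ℝ,
        w₀ + w₁ ⬝ᵥ x + ∑ i, ∑ j ∈ Finset.Ioi i, (v i ⬝ᵥ v j) * x i * x j =
          u ⬝ᵥ lpnn dd W V
            (fun i => Fin.snoc (α := fun _ : Fin (d₀ + 1) => ℝ) x 1 (Fin.cast hd i)) L := by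
  let A : Matrix (Fin d₀) (Fin d₀) ℝ := Matrix.of fun i j => if i < j then v i ⬝ᵥ v j else 0
  refine ⟨1, fun _ => d₀ + 1, rfl, fun _ => augmentedMatrix A w₁ w₀, fun _ => 1, 1, fun x => ?_⟩
  have hx : (fun i => Fin.snoc (α := fun _ : Fin (d₀ + 1) => ℝ) x 1 (Fin.cast rfl i)) =
      Fin.snoc x 1 := rfl
  rw [hx, one_dotProduct_lpnn_one, snoc_dotProduct_augmentedMatrix_mulVec,
    sum_sum_Ioi_eq_dotProduct_mulVec]
  ring
end

section
/- If f : ℝ^{d_L} × Y → ℝ is such that h ↦ f(h, y) is convex for each label y, then the LPNN training objective is multiconvex in the parameters: for any fixed input x, fixed label y, fixed layer index ℓ₀ ∈ {1, …, L}, and fixed values of all weight matrices except W^{ℓ₀} (respectively except V^{ℓ₀}), the map W^{ℓ₀} ↦ f(h^L(x), y) (respectively V^{ℓ₀} ↦ f(h^L(x), y)) is a convex function on the corresponding matrix space. -/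
open Matrix

/-!
Once every weight except `W^{ℓ₀}` (or `V^{ℓ₀}`) is fixed, `h^{ℓ₀}` no longer depends on the free
matrix `M`, so `h^{ℓ₀+1}` is linear in `M`; each later layer `h ↦ (W^ℓ h) ⊙ (V^ℓ x)` is linear
in the hidden state, hence `M ↦ h^L(x)` is linear for `L > ℓ₀`, and a convex function composed
with a linear map is convex.
-/

section Linearity

variable {m n : Type*} [Fintype n]

theorem isLinearMap_mulVec_mul (A : Matrix m n ℝ) (c : m → ℝ) :
    IsLinearMap ℝ fun v : n → ℝ => (A *ᵥ v) * c :=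
  ⟨fun v w => by rw [mulVec_add, add_mul], fun a v => by rw [mulVec_smul, smul_mul_assoc]⟩

theorem isLinearMap_mulVec_left_mul (v : n → ℝ) (c : m → ℝ) :
    IsLinearMap ℝ fun A : Matrix m n ℝ => (A *ᵥ v) * c :=
  ⟨fun A B => by rw [add_mulVec, add_mul], fun a A => by rw [smul_mulVec, smul_mul_assoc]⟩

theorem isLinearMap_mul_mulVec_left (b : m → ℝ) (v : n → ℝ) :
    IsLinearMap ℝ fun A : Matrix m n ℝ => b * (A *ᵥ v) :=
  ⟨fun A B => by rw [add_mulVec, mul_add], fun a A => by rw [smul_mulVec, mul_smul_comm]⟩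

end Linearity

section Lpnn

variable {d : ℕ → ℕ} {W : ∀ ℓ : ℕ, Matrix (Fin (d (ℓ + 1))) (Fin (d ℓ)) ℝ}
  {V : ∀ ℓ : ℕ, Matrix (Fin (d (ℓ + 1))) (Fin (d 0)) ℝ} {x : Fin (d 0) → ℝ}

theorem lpnn_succ (L : ℕ) : lpnn d W V x (L + 1) = (W L *ᵥ lpnn d W V x L) * (V L *ᵥ x) := rfl

theorem lpnn_congr {W' : ∀ ℓ : ℕ, Matrix (Fin (d (ℓ + 1))) (Fin (d ℓ)) ℝ}
    {V' : ∀ ℓ : ℕ, Matrix (Fin (d (ℓ + 1))) (Fin (d 0)) ℝ} {K : ℕ}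
    (hW : ∀ ℓ < K, W' ℓ = W ℓ) (hV : ∀ ℓ < K, V' ℓ = V ℓ) :
    lpnn d W' V' x K = lpnn d W V x K := by
  induction K with
  | zero => rfl
  | succ K ih =>
    rw [lpnn_succ, lpnn_succ, hW K K.lt_succ_self, hV K K.lt_succ_self,
      ih (fun ℓ h => hW ℓ (h.trans K.lt_succ_self)) (fun ℓ h => hV ℓ (h.trans K.lt_succ_self))]

theorem lpnn_update_W_of_le {ℓ₀ K : ℕ} (M : Matrix (Fin (d (ℓ₀ + 1))) (Fin (d ℓ₀)) ℝ)
    (hK : K ≤ ℓ₀) : lpnn d (Function.update W ℓ₀ M) V x K = lpnn d W V x K :=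
  lpnn_congr (fun _ h => Function.update_of_ne (by omega) _ _) fun _ _ => rfl

theorem lpnn_update_V_of_le {ℓ₀ K : ℕ} (M : Matrix (Fin (d (ℓ₀ + 1))) (Fin (d 0)) ℝ)
    (hK : K ≤ ℓ₀) : lpnn d W (Function.update V ℓ₀ M) x K = lpnn d W V x K :=
  lpnn_congr (fun _ _ => rfl) fun _ h => Function.update_of_ne (by omega) _ _

theorem isLinearMap_lpnn_of_lt {E : Type*} [AddCommMonoid E] [Module ℝ E]
    {Wp : E → ∀ ℓ : ℕ, Matrix (Fin (d (ℓ + 1))) (Fin (d ℓ)) ℝ}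
    {Vp : E → ∀ ℓ : ℕ, Matrix (Fin (d (ℓ + 1))) (Fin (d 0)) ℝ} {ℓ₀ L : ℕ}
    (hW : ∀ p, ∀ ℓ, ℓ₀ < ℓ → Wp p ℓ = W ℓ) (hV : ∀ p, ∀ ℓ, ℓ₀ < ℓ → Vp p ℓ = V ℓ)
    (hlin : IsLinearMap ℝ fun p => lpnn d (Wp p) (Vp p) x (ℓ₀ + 1)) (hL : ℓ₀ < L) :
    IsLinearMap ℝ fun p => lpnn d (Wp p) (Vp p) x L := by
  induction L, hL using Nat.le_induction with
  | base => exact hlin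
  | succ L hL ih =>
    simp only [lpnn_succ, hW _ L hL, hV _ L hL]
    exact (((isLinearMap_mulVec_mul (W L) (V L *ᵥ x)).mk' _).comp (ih.mk' _)).isLinear

theorem isLinearMap_lpnn_update_W {ℓ₀ L : ℕ} (hL : ℓ₀ < L) :
    IsLinearMap ℝ fun M : Matrix (Fin (d (ℓ₀ + 1))) (Fin (d ℓ₀)) ℝ =>
      lpnn d (Function.update W ℓ₀ M) V x L := by
  refine isLinearMap_lpnn_of_lt (fun _ ℓ h => Function.update_of_ne h.ne' _ _)
    (fun _ _ _ => rfl) ?_ hL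
  simp only [lpnn_succ, Function.update_self, lpnn_update_W_of_le _ le_rfl]
  exact isLinearMap_mulVec_left_mul _ _

theorem isLinearMap_lpnn_update_V {ℓ₀ L : ℕ} (hL : ℓ₀ < L) :
    IsLinearMap ℝ fun M : Matrix (Fin (d (ℓ₀ + 1))) (Fin (d 0)) ℝ =>
      lpnn d W (Function.update V ℓ₀ M) x L := by
  refine isLinearMap_lpnn_of_lt (fun _ _ _ => rfl)
    (fun _ ℓ h => Function.update_of_ne h.ne' _ _) ?_ hL
  simp only [lpnn_succ, Function.update_self, lpnn_update_V_of_le _ le_rfl]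
  exact isLinearMap_mul_mulVec_left _ _

end Lpnn

/-- if the loss `h ↦ f(h, y)` is convex for every label `y`, then the
LPNN training objective is multiconvex: for fixed input `x`, label `y`, and layer
index, the objective is convex as a function of the weight matrix `W^{ℓ₀}`
(resp. `V^{ℓ₀}`) of that layer, all other weights held fixed. -/
theorem lpnn_loss_multiconvex {Y : Type*} (d : ℕ → ℕ)
    (W : ∀ ℓ : ℕ, Matrix (Fin (d (ℓ + 1))) (Fin (d ℓ)) ℝ)
    (V : ∀ ℓ : ℕ, Matrix (Fin (d (ℓ + 1))) (Fin (d 0)) ℝ)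
    (x : Fin (d 0) → ℝ) (L : ℕ)
    (f : (Fin (d L) → ℝ) → Y → ℝ)
    (hf : ∀ y : Y, ConvexOn ℝ Set.univ (fun h => f h y))
    (y : Y) (ℓ₀ : ℕ) (hℓ₀ : ℓ₀ < L) :
    ConvexOn ℝ Set.univ (fun M : Matrix (Fin (d (ℓ₀ + 1))) (Fin (d ℓ₀)) ℝ =>
        f (lpnn d (Function.update W ℓ₀ M) V x L) y) ∧
    ConvexOn ℝ Set.univ (fun M : Matrix (Fin (d (ℓ₀ + 1))) (Fin (d 0)) ℝ =>
        f (lpnn d W (Function.update V ℓ₀ M) x L) y) :=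
  ⟨(hf y).comp_linearMap (isLinearMap_lpnn_update_W hℓ₀).mk',
    (hf y).comp_linearMap (isLinearMap_lpnn_update_V hℓ₀).mk'⟩
end

section
/- The second moments of an LPNN's hidden layers under independent random weights satisfy a layer-wise recursion: let (W^1, …, W^L, V^1, …, V^L) be mutually independent random matrices whose entries all lie in L^{4L}, fix x ∈ ℝ^{d_0}, and define Σ^0 = x x^⊤ and Σ^ℓ = E[h^ℓ(x) h^ℓ(x)^⊤] for ℓ = 1, …, L. Then each Σ^ℓ is well defined and for all ℓ ≥ 1 and indices i, j: Σ^ℓ_{ij} = ( x^⊤ E[(V^ℓ_i)^⊤ V^ℓ_j] x ) · trace( E[(W^ℓ_i)^⊤ W^ℓ_j] Σ^{ℓ-1} ), where W^ℓ_i and V^ℓ_i denote the i-th rows of W^ℓ and V^ℓ viewed as 1 × d_{ℓ-1} and 1 × d_0 matrices respectively. -/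
open Matrix

open MeasureTheory ProbabilityTheory

/-- The space in which the random weight matrix indexed by `Sum.inl ℓ`
(a `W`-matrix) or `Sum.inr ℓ` (a `V`-matrix) lives, for layers `ℓ : Fin L`. -/
def lpnnWeightSpace (d : ℕ → ℕ) (L : ℕ) : Fin L ⊕ Fin L → Type
  | .inl ℓ => Fin (d (ℓ + 1)) → Fin (d ℓ) → ℝ
  | .inr ℓ => Fin (d (ℓ + 1)) → Fin (d 0) → ℝ

instance (d : ℕ → ℕ) (L : ℕ) : ∀ k, MeasurableSpace (lpnnWeightSpace d L k)
  | .inl _ => inferInstanceAs (MeasurableSpace (_ → _ → ℝ))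
  | .inr _ => inferInstanceAs (MeasurableSpace (_ → _ → ℝ))

/-- The random LPNN output `h^ℓ(x)(ω)` for random weights `W, V`. -/
def lpnnRand {Ω : Type*} (d : ℕ → ℕ)
    (W : ∀ ℓ : ℕ, Ω → Fin (d (ℓ + 1)) → Fin (d ℓ) → ℝ)
    (V : ∀ ℓ : ℕ, Ω → Fin (d (ℓ + 1)) → Fin (d 0) → ℝ)
    (x : Fin (d 0) → ℝ) (ℓ : ℕ) (ω : Ω) : Fin (d ℓ) → ℝ :=
  lpnn d (fun ℓ' => Matrix.of (W ℓ' ω)) (fun ℓ' => Matrix.of (V ℓ' ω)) x ℓ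

/-- The second-moment matrices `Σ^ℓ`: `Σ^0 = x xᵀ` and
`Σ^ℓ = E[h^ℓ(x) h^ℓ(x)ᵀ]` for `ℓ ≥ 1`. -/
noncomputable def lpnnSecondMoment {Ω : Type*} [MeasurableSpace Ω] (μ : Measure Ω)
    (d : ℕ → ℕ)
    (W : ∀ ℓ : ℕ, Ω → Fin (d (ℓ + 1)) → Fin (d ℓ) → ℝ)
    (V : ∀ ℓ : ℕ, Ω → Fin (d (ℓ + 1)) → Fin (d 0) → ℝ)
    (x : Fin (d 0) → ℝ) : ∀ ℓ : ℕ, Matrix (Fin (d ℓ)) (Fin (d ℓ)) ℝ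
  | 0 => Matrix.of fun a b => x a * x b
  | (ℓ + 1) => Matrix.of fun a b =>
      ∫ ω, lpnnRand d W V x (ℓ + 1) ω a * lpnnRand d W V x (ℓ + 1) ω b ∂μ

/-!
Write `h = h^ℓ(x)`, `u = W^ℓ h` and `v = V^ℓ x`, so that `h^{ℓ+1}_i = u_i v_i`. The gate
weights `V^ℓ` are independent of `(W^ℓ, h)`, because `h` is a measurable function of the weights
of the earlier layers; hence `E[h^{ℓ+1}_i h^{ℓ+1}_j] = E[u_i u_j] E[v_i v_j]`. Expanding the two
quadratic forms, `E[v_i v_j] = xᵀ E[(V^ℓ_i)ᵀ V^ℓ_j] x`, and, since `W^ℓ` is independent of `h`,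
`E[u_i u_j] = ∑_{a,b} E[W^ℓ_{ia} W^ℓ_{jb}] E[h_a h_b] = trace(E[(W^ℓ_i)ᵀ W^ℓ_j] Σ^ℓ)`.

All moments involved are finite by Hölder's inequality: each entry of `h^ℓ` is a sum of products
of `2ℓ` weight entries (and coordinates of `x`), so it lies in `L^{4L/(2ℓ)} ⊆ L²` for `ℓ ≤ L`.
Independence is used through the σ-algebras generated by disjoint blocks of weights, so the
weights need only be a.e.-measurable.
-/

open scoped ENNReal

theorem MeasureTheory.MemLp.mul_of_inv {α : Type*} [MeasurableSpace α] {μ : Measure α}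
    {f g : α → ℝ} {a b : ℝ≥0∞} (hf : MemLp f a⁻¹ μ) (hg : MemLp g b⁻¹ μ) :
    MemLp (fun ω => f ω * g ω) (a + b)⁻¹ μ :=
  haveI : ENNReal.HolderTriple a⁻¹ b⁻¹ (a + b)⁻¹ := ⟨by simp only [inv_inv]⟩
  hg.mul' hf

namespace ProbabilityTheory

variable {Ω ι : Type*} {β : ι → Type*} [∀ i, MeasurableSpace (β i)] {F : ∀ i, Ω → β i}

theorem measurable_comap_finset_apply {T : Finset ι} {k : ι} (hk : k ∈ T) :
    Measurable[MeasurableSpace.comap (fun ω (i : T) => F i ω) inferInstance] (F k) :=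
  (measurable_pi_apply (X := fun i : T => β i) ⟨k, hk⟩).comp
    (comap_measurable fun ω (i : T) => F i ω)

theorem iIndepFun.indepFun_of_measurable_comap [MeasurableSpace Ω] {μ : Measure Ω}
    (hF : iIndepFun F μ) (hFm : ∀ i, AEMeasurable (F i) μ) {S T : Finset ι} (hST : Disjoint S T)
    {γ γ' : Type*} [MeasurableSpace γ] [MeasurableSpace γ'] {X : Ω → γ} {Y : Ω → γ'}
    (hX : Measurable[MeasurableSpace.comap (fun ω (i : S) => F i ω) inferInstance] X)
    (hY : Measurable[MeasurableSpace.comap (fun ω (i : T) => F i ω) inferInstance] Y) :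
    IndepFun X Y μ := by
  rw [IndepFun_iff_Indep]
  exact indep_of_indep_of_le (IndepFun_iff_Indep _ _ _ |>.1 (hF.indepFun_finset₀ S T hST hFm))
    (measurable_iff_comap_le.1 hX) (measurable_iff_comap_le.1 hY)

end ProbabilityTheory

section QuadraticForms

variable {Ω ι κ : Type*} [MeasurableSpace Ω] {μ : Measure Ω} [Fintype κ]

theorem integral_sum_mul_sum [Fintype ι] {f : ι → Ω → ℝ} {g : κ → Ω → ℝ}
    (hfg : ∀ a b, Integrable (fun ω => f a ω * g b ω) μ) :
    ∫ ω, (∑ a, f a ω) * (∑ b, g b ω) ∂μ = ∑ a, ∑ b, ∫ ω, f a ω * g b ω ∂μ := by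
  simp only [Finset.sum_mul_sum]
  rw [integral_finsetSum _ fun a _ => integrable_finsetSum _ fun b _ => hfg a b]
  exact Finset.sum_congr rfl fun a _ => integral_finsetSum _ fun b _ => hfg a b

theorem integral_mulVec_mul_mulVec {A : Ω → ι → κ → ℝ}
    (hA : ∀ i k, MemLp (fun ω => A ω i k) 2 μ) (x : κ → ℝ) (i j : ι) :
    ∫ ω, (Matrix.of (A ω) *ᵥ x) i * (Matrix.of (A ω) *ᵥ x) j ∂μ =
      x ⬝ᵥ (Matrix.of fun a b => ∫ ω, A ω i a * A ω j b ∂μ) *ᵥ x := by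
  simp only [mulVec, dotProduct, of_apply]
  rw [integral_sum_mul_sum fun a b => ((hA i a).integrable_mul (hA j b)).mul_const (x a * x b)
    |>.congr (.of_forall fun ω => by simp only [Pi.mul_apply]; ring)]
  simp only [Finset.mul_sum]
  refine Finset.sum_congr rfl fun a _ => Finset.sum_congr rfl fun b _ => ?_
  rw [← integral_mul_const, ← integral_const_mul]
  exact integral_congr_ae (.of_forall fun ω => by ring)

theorem integral_mulVec_mul_mulVec_of_indepFun {A : Ω → ι → κ → ℝ} {y : Ω → κ → ℝ}
    (hAy : IndepFun A y μ) (hA : ∀ i k, MemLp (fun ω => A ω i k) 2 μ)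
    (hy : ∀ k, MemLp (fun ω => y ω k) 2 μ) (i j : ι) :
    ∫ ω, (Matrix.of (A ω) *ᵥ y ω) i * (Matrix.of (A ω) *ᵥ y ω) j ∂μ =
      trace ((Matrix.of fun a b => ∫ ω, A ω i a * A ω j b ∂μ) *
        Matrix.of fun a b => ∫ ω, y ω a * y ω b ∂μ) := by
  have hindep : ∀ a b, IndepFun (fun ω => A ω i a * A ω j b) (fun ω => y ω b * y ω a) μ :=
    fun a b => hAy.comp (φ := fun M : ι → κ → ℝ => M i a * M j b)
      (ψ := fun v : κ → ℝ => v b * v a) (by fun_prop) (by fun_prop)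
  simp only [mulVec, dotProduct, of_apply, trace, diag, Matrix.mul_apply]
  rw [integral_sum_mul_sum fun a b => ((hindep a b).integrable_mul
    ((hA i a).integrable_mul (hA j b)) ((hy b).integrable_mul (hy a))).congr
    (.of_forall fun ω => by simp only [Pi.mul_apply]; ring)]
  refine Finset.sum_congr rfl fun a _ => Finset.sum_congr rfl fun b _ => ?_
  rw [← (hindep a b).integral_fun_mul_eq_mul_integral
    ((hA i a).1.mul (hA j b).1) ((hy b).1.mul (hy a).1)]
  exact integral_congr_ae (.of_forall fun ω => by ring)

end QuadraticForms

section Network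

variable {Ω : Type*} {d : ℕ → ℕ}
  {W : ∀ ℓ : ℕ, Ω → Fin (d (ℓ + 1)) → Fin (d ℓ) → ℝ}
  {V : ∀ ℓ : ℕ, Ω → Fin (d (ℓ + 1)) → Fin (d 0) → ℝ} {x : Fin (d 0) → ℝ}

theorem lpnnRand_succ_apply (ℓ : ℕ) (ω : Ω) (a : Fin (d (ℓ + 1))) :
    lpnnRand d W V x (ℓ + 1) ω a =
      (∑ c, W ℓ ω a c * lpnnRand d W V x ℓ ω c) * ∑ e, V ℓ ω a e * x e :=
  rfl

theorem measurable_lpnnRand {m : MeasurableSpace Ω} {ℓ : ℕ}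
    (hW : ∀ k < ℓ, Measurable (W k)) (hV : ∀ k < ℓ, Measurable (V k)) :
    Measurable (lpnnRand d W V x ℓ) := by
  induction ℓ with
  | zero => exact measurable_const
  | succ ℓ ih =>
    have hWℓ := hW ℓ ℓ.lt_succ_self
    have hVℓ := hV ℓ ℓ.lt_succ_self
    have hh := ih (fun k hk => hW k (hk.trans ℓ.lt_succ_self))
      (fun k hk => hV k (hk.trans ℓ.lt_succ_self))
    refine measurable_pi_lambda _ fun a => ?_
    simp only [lpnnRand_succ_apply]
    fun_prop

variable [MeasurableSpace Ω] {μ : Measure Ω}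

theorem memLp_lpnnRand {s : ℝ≥0∞} {ℓ : ℕ}
    (hW : ∀ k < ℓ, ∀ i j, MemLp (fun ω => W k ω i j) s⁻¹ μ)
    (hV : ∀ k < ℓ, ∀ i j, MemLp (fun ω => V k ω i j) s⁻¹ μ) (a : Fin (d ℓ)) :
    MemLp (fun ω => lpnnRand d W V x ℓ ω a) (2 * ℓ * s)⁻¹ μ := by
  induction ℓ with
  | zero => simpa [lpnnRand, lpnn] using memLp_top_const (μ := μ) (x a)
  | succ ℓ ih =>
    have hWh : MemLp (fun ω => ∑ c, W ℓ ω a c * lpnnRand d W V x ℓ ω c) (s + 2 * ℓ * s)⁻¹ μ :=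
      memLp_finsetSum _ fun c _ => (hW ℓ ℓ.lt_succ_self a c).mul_of_inv
        (ih (fun k hk => hW k (hk.trans ℓ.lt_succ_self))
          (fun k hk => hV k (hk.trans ℓ.lt_succ_self)) c)
    have hVx : MemLp (fun ω => ∑ e, V ℓ ω a e * x e) s⁻¹ μ :=
      memLp_finsetSum _ fun e _ => (hV ℓ ℓ.lt_succ_self a e).mul_const (x e)
    have := hWh.mul_of_inv hVx
    rwa [show s + 2 * ℓ * s + s = 2 * ↑(ℓ + 1) * s by push_cast; ring] at this

theorem memLp_two_lpnnRand [IsFiniteMeasure μ] {L ℓ : ℕ}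
    (hW : ∀ k < L, ∀ i j, MemLp (fun ω => W k ω i j) (4 * L) μ)
    (hV : ∀ k < L, ∀ i j, MemLp (fun ω => V k ω i j) (4 * L) μ) (hℓ : ℓ ≤ L) (a : Fin (d ℓ)) :
    MemLp (fun ω => lpnnRand d W V x ℓ ω a) 2 μ := by
  let s : ℝ≥0∞ := (4 * L)⁻¹
  have hℓ' : (ℓ : ℝ≥0∞) ≤ L := by exact_mod_cast hℓ
  refine (memLp_lpnnRand (s := s)
    (fun k hk i j => by simpa only [s, inv_inv] using hW k (hk.trans_le hℓ) i j)
    (fun k hk i j => by simpa only [s, inv_inv] using hV k (hk.trans_le hℓ) i j) a).mono_exponent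
    (ENNReal.le_inv_iff_mul_le.2 ?_)
  calc 2 * (2 * ℓ * s) = 4 * ℓ * s := by ring
    _ ≤ 4 * L * s := by gcongr
    _ ≤ 1 := ENNReal.mul_inv_le_one _

theorem lpnnSecondMoment_eq [IsProbabilityMeasure μ] (ℓ : ℕ) :
    lpnnSecondMoment μ d W V x ℓ =
      Matrix.of fun a b => ∫ ω, lpnnRand d W V x ℓ ω a * lpnnRand d W V x ℓ ω b ∂μ := by
  cases ℓ with
  | zero => ext a b; simp [lpnnSecondMoment, lpnnRand, lpnn]
  | succ ℓ => rfl

end Network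

section Recursion

variable {Ω : Type*} {d : ℕ → ℕ} {L : ℕ}
  {W : ∀ ℓ : ℕ, Ω → Fin (d (ℓ + 1)) → Fin (d ℓ) → ℝ}
  {V : ∀ ℓ : ℕ, Ω → Fin (d (ℓ + 1)) → Fin (d 0) → ℝ} {x : Fin (d 0) → ℝ}

variable (L W V) in
def lpnnWeights : ∀ k : Fin L ⊕ Fin L, Ω → lpnnWeightSpace d L k
  | .inl ℓ => W ℓ
  | .inr ℓ => V ℓ

local notation "σ[" T "]" => MeasurableSpace.comap (fun ω (k : T) => lpnnWeights L W V k ω) inferInstance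

theorem measurable_lpnnRand_comap {T : Finset (Fin L ⊕ Fin L)} {ℓ : ℕ} (hℓ : ℓ ≤ L)
    (hT : ∀ k (hk : k < ℓ), .inl ⟨k, hk.trans_le hℓ⟩ ∈ T ∧ .inr ⟨k, hk.trans_le hℓ⟩ ∈ T) :
    Measurable[σ[T]] (lpnnRand d W V x ℓ) :=
  measurable_lpnnRand
    (fun k hk => measurable_comap_finset_apply (F := lpnnWeights L W V) (hT k hk).1)
    (fun k hk => measurable_comap_finset_apply (F := lpnnWeights L W V) (hT k hk).2)

variable [MeasurableSpace Ω] {μ : Measure Ω}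

theorem aemeasurable_lpnnWeights
    (hW : ∀ k < L, ∀ i j, AEMeasurable (fun ω => W k ω i j) μ)
    (hV : ∀ k < L, ∀ i j, AEMeasurable (fun ω => V k ω i j) μ) (k : Fin L ⊕ Fin L) :
    AEMeasurable (lpnnWeights L W V k) μ := by
  rcases k with k | k
  · exact aemeasurable_pi_lambda _ fun i => aemeasurable_pi_lambda _ fun j => hW k k.2 i j
  · exact aemeasurable_pi_lambda _ fun i => aemeasurable_pi_lambda _ fun j => hV k k.2 i j

theorem indepFun_W_lpnnRand (hindep : iIndepFun (lpnnWeights L W V) μ)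
    (hmeas : ∀ k, AEMeasurable (lpnnWeights L W V k) μ) {ℓ : ℕ} (hℓ : ℓ < L) :
    IndepFun (W ℓ) (lpnnRand d W V x ℓ) μ := by
  let S : Finset (Fin L ⊕ Fin L) := {.inl ⟨ℓ, hℓ⟩}
  let T : Finset (Fin L ⊕ Fin L) := Sᶜ
  have hWm : Measurable[σ[S]] (W ℓ) :=
    measurable_comap_finset_apply (F := lpnnWeights L W V) (k := .inl ⟨ℓ, hℓ⟩)
      (Finset.mem_singleton_self _)
  exact hindep.indepFun_of_measurable_comap hmeas (T := T) disjoint_compl_right hWm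
    (measurable_lpnnRand_comap hℓ.le fun k hk => by simp [S, T, hk.ne])

theorem indepFun_prodMk_W_lpnnRand_V (hindep : iIndepFun (lpnnWeights L W V) μ)
    (hmeas : ∀ k, AEMeasurable (lpnnWeights L W V k) μ) {ℓ : ℕ} (hℓ : ℓ < L) :
    IndepFun (fun ω => (W ℓ ω, lpnnRand d W V x ℓ ω)) (V ℓ) μ := by
  let T : Finset (Fin L ⊕ Fin L) := {.inr ⟨ℓ, hℓ⟩}
  let S : Finset (Fin L ⊕ Fin L) := Tᶜ
  have hWm : Measurable[σ[S]] (W ℓ) :=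
    measurable_comap_finset_apply (F := lpnnWeights L W V) (k := .inl ⟨ℓ, hℓ⟩) (by simp [S, T])
  have hhm : Measurable[σ[S]] (lpnnRand d W V x ℓ) :=
    measurable_lpnnRand_comap hℓ.le fun k hk => by simp [S, T, hk.ne]
  have hVm : Measurable[σ[T]] (V ℓ) :=
    measurable_comap_finset_apply (F := lpnnWeights L W V) (k := .inr ⟨ℓ, hℓ⟩)
      (Finset.mem_singleton_self _)
  exact hindep.indepFun_of_measurable_comap hmeas disjoint_compl_left (hWm.prodMk hhm) hVm

theorem lpnnSecondMoment_succ_apply [IsProbabilityMeasure μ]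
    (hindep : iIndepFun (lpnnWeights L W V) μ)
    (hW : ∀ k < L, ∀ i j, MemLp (fun ω => W k ω i j) 2 μ)
    (hV : ∀ k < L, ∀ i j, MemLp (fun ω => V k ω i j) 2 μ) {ℓ : ℕ} (hℓ : ℓ < L)
    (hh : ∀ a, MemLp (fun ω => lpnnRand d W V x ℓ ω a) 2 μ) (i j : Fin (d (ℓ + 1))) :
    lpnnSecondMoment μ d W V x (ℓ + 1) i j =
      (x ⬝ᵥ (Matrix.of fun a b => ∫ ω, V ℓ ω i a * V ℓ ω j b ∂μ) *ᵥ x) *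
        trace ((Matrix.of fun a b => ∫ ω, W ℓ ω i a * W ℓ ω j b ∂μ) *
          lpnnSecondMoment μ d W V x ℓ) := by
  set h := lpnnRand d W V x ℓ
  have hmeas := aemeasurable_lpnnWeights (fun k hk i j => (hW k hk i j).1.aemeasurable)
    (fun k hk i j => (hV k hk i j).1.aemeasurable)
  have hWa : ∀ a c, AEStronglyMeasurable (fun ω => W ℓ ω a c) μ := fun a c => (hW ℓ hℓ a c).1
  have hVa : ∀ a e, AEStronglyMeasurable (fun ω => V ℓ ω a e) μ := fun a e => (hV ℓ hℓ a e).1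
  have hha : ∀ c, AEStronglyMeasurable (fun ω => h ω c) μ := fun c => (hh c).1
  have hindep_uv : IndepFun (fun ω => (of (W ℓ ω) *ᵥ h ω) i * (of (W ℓ ω) *ᵥ h ω) j)
      (fun ω => (of (V ℓ ω) *ᵥ x) i * (of (V ℓ ω) *ᵥ x) j) μ :=
    (indepFun_prodMk_W_lpnnRand_V hindep hmeas hℓ).comp
      (φ := fun p : (Fin (d (ℓ + 1)) → Fin (d ℓ) → ℝ) × (Fin (d ℓ) → ℝ) =>
        (of p.1 *ᵥ p.2) i * (of p.1 *ᵥ p.2) j)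
      (ψ := fun M : Fin (d (ℓ + 1)) → Fin (d 0) → ℝ => (of M *ᵥ x) i * (of M *ᵥ x) j)
      (by simp only [mulVec, dotProduct, of_apply]; fun_prop)
      (by simp only [mulVec, dotProduct, of_apply]; fun_prop)
  calc lpnnSecondMoment μ d W V x (ℓ + 1) i j
      = ∫ ω, (of (W ℓ ω) *ᵥ h ω) i * (of (W ℓ ω) *ᵥ h ω) j *
          ((of (V ℓ ω) *ᵥ x) i * (of (V ℓ ω) *ᵥ x) j) ∂μ :=
        integral_congr_ae (.of_forall fun ω => by
          simp only [lpnnRand_succ_apply, mulVec, dotProduct, of_apply, h]; ring)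
    _ = (∫ ω, (of (W ℓ ω) *ᵥ h ω) i * (of (W ℓ ω) *ᵥ h ω) j ∂μ) *
          ∫ ω, (of (V ℓ ω) *ᵥ x) i * (of (V ℓ ω) *ᵥ x) j ∂μ := by
        refine hindep_uv.integral_fun_mul_eq_mul_integral ?_ ?_ <;>
          simp only [mulVec, dotProduct, of_apply] <;> fun_prop
    _ = _ := by
        rw [integral_mulVec_mul_mulVec_of_indepFun (indepFun_W_lpnnRand hindep hmeas hℓ)
          (hW ℓ hℓ) hh, integral_mulVec_mul_mulVec (hV ℓ hℓ), lpnnSecondMoment_eq ℓ, mul_comm]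

end Recursion

/-- if the `2L` weight matrices of an LPNN are mutually independent
random matrices whose entries all lie in `L^{4L}`, then the second-moment matrices
`Σ^ℓ` are well defined (all products of hidden-unit pairs are integrable) and
satisfy the layer-wise recursion
`Σ^ℓ_{ij} = (xᵀ E[(V^ℓ_i)ᵀ V^ℓ_j] x) ⋅ trace(E[(W^ℓ_i)ᵀ W^ℓ_j] Σ^{ℓ-1})`. -/
theorem lpnn_second_moment_recursion {Ω : Type*} [MeasurableSpace Ω] (μ : Measure Ω)
    [IsProbabilityMeasure μ] (d : ℕ → ℕ) (L : ℕ)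
    (W : ∀ ℓ : ℕ, Ω → Fin (d (ℓ + 1)) → Fin (d ℓ) → ℝ)
    (V : ∀ ℓ : ℕ, Ω → Fin (d (ℓ + 1)) → Fin (d 0) → ℝ)
    (hindep : iIndepFun
      (fun k : Fin L ⊕ Fin L => match k with
        | .inl ℓ => W ℓ
        | .inr ℓ => V ℓ : ∀ k, Ω → lpnnWeightSpace d L k) μ)
    (hW : ∀ ℓ < L, ∀ i j, MemLp (fun ω => W ℓ ω i j) (4 * L) μ)
    (hV : ∀ ℓ < L, ∀ i j, MemLp (fun ω => V ℓ ω i j) (4 * L) μ)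
    (x : Fin (d 0) → ℝ) :
    (∀ ℓ ≤ L, ∀ a b,
      Integrable (fun ω => lpnnRand d W V x ℓ ω a * lpnnRand d W V x ℓ ω b) μ) ∧
    (∀ ℓ < L, ∀ i j : Fin (d (ℓ + 1)),
      lpnnSecondMoment μ d W V x (ℓ + 1) i j =
        (x ⬝ᵥ (Matrix.of fun a b => ∫ ω, V ℓ ω i a * V ℓ ω j b ∂μ).mulVec x) *
          Matrix.trace ((Matrix.of fun a b => ∫ ω, W ℓ ω i a * W ℓ ω j b ∂μ) *
            lpnnSecondMoment μ d W V x ℓ)) := by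
  have hh := fun ℓ (hℓ : ℓ ≤ L) => memLp_two_lpnnRand (x := x) hW hV hℓ
  have htwo : ∀ ℓ < L, (2 : ℝ≥0∞) ≤ 4 * L := fun ℓ hℓ => by exact_mod_cast (by omega : 2 ≤ 4 * L)
  refine ⟨fun ℓ hℓ a b => (hh ℓ hℓ a).integrable_mul (hh ℓ hℓ b), fun ℓ hℓ i j => ?_⟩
  exact lpnnSecondMoment_succ_apply hindep
    (fun k hk a b => (hW k hk a b).mono_exponent (htwo k hk))
    (fun k hk a b => (hV k hk a b).mono_exponent (htwo k hk)) hℓ (hh ℓ hℓ.le) i j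
end
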